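/- Let G ≥ 1 be an integer, let s_max ≥ 2 be an integer, let a_1, …, a_G be integers, let m ≥ 0 and δ ≥ 0 be real numbers with δ(2 s_max − 1) < 1, and let c_1, …, c_G be natural numbers satisfying (1 − δ) m ≤ c_g ≤ (1 + δ) m for every g. An assignment chooses, for each g, a multiset S_g consisting of exactly c_g integers from {1, …, s_max} (each value available in unlimited supply) and sets L_g = a_g + ∑_{s ∈ S_g} s. Then, with γ = 1 − δ(2 s_max − 1) > 0, the minimum over all assignments of the gap max_g L_g − min_g L_g is at most max{ s_max, (max_g a_g − min_g a_g) − γ m }. -/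
import Mathlib


open Finset

/-- An assignment is valid if each worker `g` gets exactly `c g` jobs, each of
integer size between `1` and `smax`. -/
def ValidAssignment (G smax : ℕ) (c : Fin G → ℕ) (S : Fin G → Multiset ℤ) : Prop :=
  (∀ g, (S g).card = c g) ∧ ∀ g, ∀ x ∈ S g, 1 ≤ x ∧ x ≤ (smax : ℤ)

/-- Maximum of a finite family of reals. -/
noncomputable def finMax {G : ℕ} [NeZero G] (v : Fin G → ℝ) : ℝ :=
  Finset.univ.sup' ⟨0, Finset.mem_univ 0⟩ v

/-- Minimum of a finite family of reals. -/
noncomputable def finMin {G : ℕ} [NeZero G] (v : Fin G → ℝ) : ℝ :=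
  Finset.univ.inf' ⟨0, Finset.mem_univ 0⟩ v

lemma exists_good_multiset (smax : ℕ) (hs : 1 ≤ smax) :
    ∀ c : ℕ, ∀ t : ℤ, (c : ℤ) ≤ t → t ≤ (c : ℤ) * smax →
    ∃ S : Multiset ℤ, S.card = c ∧ (∀ x ∈ S, 1 ≤ x ∧ x ≤ (smax : ℤ)) ∧ S.sum = t := by
  intro c
  induction c with
  | zero =>
    intro t h1 h2
    refine ⟨0, by simp, by simp, ?_⟩
    simp only [Multiset.sum_zero]
    simp only [Nat.cast_zero, zero_mul] at h1 h2
    omega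
  | succ n ih =>
    intro t h1 h2
    have hs' : (1 : ℤ) ≤ (smax : ℤ) := by exact_mod_cast hs
    have hnn : (n : ℤ) ≤ (n : ℤ) * smax := le_mul_of_one_le_right (by positivity) hs'
    set x : ℤ := min (smax : ℤ) (t - n) with hx
    have hcast : ((n + 1 : ℕ) : ℤ) * smax = (n : ℤ) * smax + smax := by push_cast; ring
    have h1' : ((n : ℤ) + 1) ≤ t := by push_cast at h1; linarith
    have hx1 : 1 ≤ x := le_min hs' (by linarith)
    have hxs : x ≤ (smax : ℤ) := min_le_left _ _
    have hb1 : (n : ℤ) ≤ t - x := by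
      have : x ≤ t - n := min_le_right _ _
      linarith
    have hb2 : t - x ≤ (n : ℤ) * smax := by
      rw [hcast] at h2
      rcases min_cases (smax : ℤ) (t - n) with ⟨h, _⟩ | ⟨h, _⟩
      · rw [hx, h]; linarith
      · rw [hx, h]; linarith
    obtain ⟨S, hcard, hmem, hsum⟩ := ih (t - x) hb1 hb2
    refine ⟨x ::ₘ S, by simp [hcard], ?_, by simp [hsum]⟩
    intro y hy
    rcases Multiset.mem_cons.mp hy with rfl | h
    · exact ⟨hx1, hxs⟩
    · exact hmem y h

/-- With pre-admission loads `a g` and admission counts `c g ∈ [(1−δ)m, (1+δ)m]`,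
there is an assignment of jobs with integer sizes in `{1, …, s_max}` whose
post-admission gap is at most `max{s_max, (max a − min a) − γ m}` where
`γ = 1 − δ(2 s_max − 1)`. -/
theorem min_gap_le_of_balanced_counts (G : ℕ) [NeZero G]
    (smax : ℕ) (hsmax : 2 ≤ smax)
    (a : Fin G → ℤ) (m δ : ℝ) (hm : 0 ≤ m) (hδ : 0 ≤ δ)
    (hδs : δ * (2 * (smax : ℝ) - 1) < 1)
    (c : Fin G → ℕ)
    (hc : ∀ g, (1 - δ) * m ≤ (c g : ℝ) ∧ (c g : ℝ) ≤ (1 + δ) * m) :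
    ∃ S : Fin G → Multiset ℤ, ValidAssignment G smax c S ∧
      finMax (fun g => ((a g + (S g).sum : ℤ) : ℝ)) -
          finMin (fun g => ((a g + (S g).sum : ℤ) : ℝ)) ≤
        max (smax : ℝ)
          ((finMax (fun g => ((a g : ℤ) : ℝ)) - finMin (fun g => ((a g : ℤ) : ℝ))) -
            (1 - δ * (2 * (smax : ℝ) - 1)) * m) := by
  have hs1 : 1 ≤ smax := le_trans (by norm_num) hsmax
  have hs' : (1 : ℤ) ≤ (smax : ℤ) := by exact_mod_cast hs1
  have hne : (Finset.univ : Finset (Fin G)).Nonempty := ⟨0, mem_univ 0⟩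
  -- argmax of a g + c g
  obtain ⟨g1, _, hg1⟩ := Finset.exists_mem_eq_sup' hne (fun g => a g + c g)
  set T : ℤ := a g1 + c g1 with hT
  have hTge : ∀ g, a g + c g ≤ T := by
    intro g
    have h := Finset.le_sup' (fun g => a g + (c g : ℤ)) (mem_univ g)
    rw [hg1] at h
    exact h
  -- argmin of a g + c g * smax
  obtain ⟨g2, _, hg2⟩ := Finset.exists_mem_eq_inf' hne (fun g => a g + (c g : ℤ) * smax)
  set M : ℤ := a g2 + (c g2 : ℤ) * smax with hM
  have hMle : ∀ g, M ≤ a g + (c g : ℤ) * smax := by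
    intro g
    have h := Finset.inf'_le (fun g => a g + (c g : ℤ) * smax) (mem_univ g)
    rw [hg2] at h
    exact h
  -- target totals
  set t : Fin G → ℤ := fun g => min (T - a g) ((c g : ℤ) * smax) with ht
  have htlb : ∀ g, (c g : ℤ) ≤ t g := by
    intro g
    refine le_min (by have := hTge g; linarith) (le_mul_of_one_le_right (by positivity) hs')
  have htub : ∀ g, t g ≤ (c g : ℤ) * smax := fun g => min_le_right _ _
  have hex : ∀ g, ∃ S : Multiset ℤ, S.card = c g ∧
      (∀ x ∈ S, 1 ≤ x ∧ x ≤ (smax : ℤ)) ∧ S.sum = t g :=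
    fun g => exists_good_multiset smax hs1 (c g) (t g) (htlb g) (htub g)
  choose S hcard hmem hsum using hex
  refine ⟨S, ⟨hcard, hmem⟩, ?_⟩
  -- loads
  have hLmax : finMax (fun g => ((a g + (S g).sum : ℤ) : ℝ)) ≤ (T : ℝ) := by
    unfold finMax
    apply Finset.sup'_le
    intro g _
    have : a g + (S g).sum ≤ T := by
      rw [hsum g]
      have : t g ≤ T - a g := min_le_left _ _
      linarith
    exact_mod_cast this
  have hLmin : (min T M : ℤ) ≤ finMin (fun g => ((a g + (S g).sum : ℤ) : ℝ)) := by
    unfold finMin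
    apply Finset.le_inf'
    intro g _
    have : min T M ≤ a g + (S g).sum := by
      rw [hsum g, ht]
      rcases min_cases (T - a g) ((c g : ℤ) * smax) with ⟨h, _⟩ | ⟨h, _⟩ <;> simp only [h]
      · have := min_le_left T M; linarith
      · have := min_le_right T M; have := hMle g; linarith
    exact_mod_cast this
  have hamax : (a g1 : ℝ) ≤ finMax (fun g => ((a g : ℤ) : ℝ)) := by
    unfold finMax; exact Finset.le_sup' (fun g => ((a g : ℤ) : ℝ)) (mem_univ g1)
  have hamin : finMin (fun g => ((a g : ℤ) : ℝ)) ≤ (a g2 : ℝ) := by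
    unfold finMin; exact Finset.inf'_le (fun g => ((a g : ℤ) : ℝ)) (mem_univ g2)
  rcases le_or_gt T M with h | h
  · have : (min T M : ℤ) = T := min_eq_left h
    rw [this] at hLmin
    have : finMax (fun g => ((a g + (S g).sum : ℤ) : ℝ)) -
        finMin (fun g => ((a g + (S g).sum : ℤ) : ℝ)) ≤ 0 := by
      linarith
    have hs0 : (0 : ℝ) ≤ (smax : ℝ) := by positivity
    exact le_trans this (le_trans hs0 (le_max_left _ _))
  · have hmin : (min T M : ℤ) = M := min_eq_right h.le
    rw [hmin] at hLmin
    have hgap : finMax (fun g => ((a g + (S g).sum : ℤ) : ℝ)) -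
        finMin (fun g => ((a g + (S g).sum : ℤ) : ℝ)) ≤ (T : ℝ) - (M : ℝ) := by
      linarith
    refine le_trans hgap (le_trans ?_ (le_max_right _ _))
    have hTM : (T : ℝ) - (M : ℝ) = ((a g1 : ℝ) - (a g2 : ℝ)) + ((c g1 : ℝ) - (smax : ℝ) * (c g2 : ℝ)) := by
      rw [hT, hM]; push_cast; ring
    rw [hTM]
    have hc1 := (hc g1).2
    have hc2 := (hc g2).1
    have hcount : (c g1 : ℝ) - (smax : ℝ) * (c g2 : ℝ) ≤ -((1 - δ * (2 * (smax : ℝ) - 1)) * m) := by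
      have hs2 : (2 : ℝ) ≤ (smax : ℝ) := by exact_mod_cast hsmax
      nlinarith [mul_le_mul_of_nonneg_left hc2 (by linarith : (0:ℝ) ≤ (smax : ℝ))]
    linarith
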